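/- arXiv:2405.13420 — 2 statements merged into one kernel-verified Lean document; each statement's English description precedes it below -/
import Mathlib

section
/- Let k be a positive integer and q a positive integer. Then the series ∑_{m ≥ 1, gcd(m,q)=1} r_k(m)²/m² converges, and ∑_{m ≥ 1, gcd(m,q)=1} r_k(m)²/m² = ∏_{p ∤ q} ( 1 + ∑_{v=1}^{k} binom(k,v)²/p^{2v} ) = C(k) · ∏_{p ∣ q} ( 1 + ∑_{v=1}^{k} binom(k,v)²/p^{2v} )^{−1}, where the first product runs over primes p not dividing q and the second over primes p dividing q; in particular, the infinite product defining C(k) converges. -/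
/-- `r_k`, the `k`-fold Dirichlet convolution of the Möbius function with itself. -/
def rk (k : ℕ) : ArithmeticFunction ℤ := ArithmeticFunction.moebius ^ k

/-- `C(k) = ∏_p (1 + ∑_{v=1}^{k} binom(k,v)²/p^{2v})`, product over all primes. -/
noncomputable def Ck (k : ℕ) : ℝ :=
  ∏' p : Nat.Primes,
    (1 + ∑ v ∈ Finset.Icc 1 k, ((k.choose v : ℝ)) ^ 2 / ((p : ℕ) : ℝ) ^ (2 * v))

open ArithmeticFunction Finset

lemma rk_isMultiplicative (k : ℕ) : (rk k).IsMultiplicative := by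
  induction k with
  | zero => exact ArithmeticFunction.isMultiplicative_one
  | succ n ih =>
    show ((ArithmeticFunction.moebius ^ n) * ArithmeticFunction.moebius).IsMultiplicative
    exact ih.mul isMultiplicative_moebius

lemma moebius_pp {p : ℕ} (hp : p.Prime) (j : ℕ) :
    ArithmeticFunction.moebius (p ^ j) = (-1) ^ j * (Nat.choose 1 j : ℤ) := by
  match j with
  | 0 => simp
  | 1 => simp [ArithmeticFunction.moebius_apply_prime hp]
  | (n+2) =>
    rw [ArithmeticFunction.moebius_apply_prime_pow hp (by omega)]
    rw [if_neg (by omega), Nat.choose_eq_zero_of_lt (by omega)]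
    simp

lemma rk_prime_pow (k : ℕ) {p : ℕ} (hp : p.Prime) (v : ℕ) :
    rk k (p ^ v) = (-1) ^ v * (Nat.choose k v : ℤ) := by
  induction k generalizing v with
  | zero =>
    show (1 : ArithmeticFunction ℤ) (p ^ v) = _
    rcases Nat.eq_zero_or_pos v with hv | hv
    · simp [hv]
    · rw [ArithmeticFunction.one_apply, if_neg (Nat.one_lt_pow hv.ne' hp.one_lt).ne',
        Nat.choose_eq_zero_of_lt hv]
      simp
  | succ n ih =>
    show ((ArithmeticFunction.moebius ^ n) * ArithmeticFunction.moebius) (p ^ v) = _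
    rw [ArithmeticFunction.mul_apply,
      Nat.sum_divisorsAntidiagonal
        (f := fun a b => (ArithmeticFunction.moebius ^ n) a * ArithmeticFunction.moebius b),
      Nat.sum_divisors_prime_pow hp]
    have key : ∀ x ∈ Finset.range (v + 1),
        (ArithmeticFunction.moebius ^ n) (p ^ x) * ArithmeticFunction.moebius (p ^ v / p ^ x)
          = (-1) ^ v * ((Nat.choose n x : ℤ) * (Nat.choose 1 (v - x) : ℤ)) := by
      intro x hx
      have hxv : x ≤ v := by simpa using Nat.lt_succ_iff.mp (Finset.mem_range.mp hx)
      have ih' : ∀ w, (ArithmeticFunction.moebius ^ n) (p ^ w) = (-1) ^ w * (Nat.choose n w : ℤ) :=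
        fun w => ih w
      rw [Nat.pow_div hxv hp.pos, ih' x, moebius_pp hp (v - x)]
      have hsgn : (-1 : ℤ) ^ x * (-1) ^ (v - x) = (-1) ^ v := by
        rw [← pow_add, Nat.add_sub_cancel' hxv]
      rw [mul_mul_mul_comm, hsgn]
    rw [Finset.sum_congr rfl key, ← Finset.mul_sum]
    congr 1
    norm_cast
    rw [← Finset.Nat.sum_antidiagonal_eq_sum_range_succ_mk
      (f := fun ij => Nat.choose n ij.1 * Nat.choose 1 ij.2)]
    exact (Nat.add_choose_eq n 1 v).symm

noncomputable def hfun (k : ℕ) : ℕ → ℝ := fun m => ((rk k m : ℝ)) ^ 2 / (m : ℝ) ^ 2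

noncomputable def fac (k : ℕ) (p : ℕ) : ℝ :=
  1 + ∑ v ∈ Finset.Icc 1 k, ((k.choose v : ℝ)) ^ 2 / (p : ℝ) ^ (2 * v)

lemma hfun_nonneg (k m : ℕ) : 0 ≤ hfun k m := by
  unfold hfun; positivity

lemma hfun_zero (k : ℕ) : hfun k 0 = 0 := by simp [hfun]

lemma hfun_one (k : ℕ) : hfun k 1 = 1 := by
  simp [hfun, (rk_isMultiplicative k).map_one]

lemma hfun_mul (k : ℕ) {m n : ℕ} (h : Nat.Coprime m n) :
    hfun k (m * n) = hfun k m * hfun k n := by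
  unfold hfun
  rw [(rk_isMultiplicative k).map_mul_of_coprime h]
  push_cast
  rw [mul_pow, mul_pow, mul_div_mul_comm]

lemma hfun_pp (k : ℕ) {p : ℕ} (hp : p.Prime) (e : ℕ) :
    hfun k (p ^ e) = ((k.choose e : ℝ)) ^ 2 / (p : ℝ) ^ (2 * e) := by
  unfold hfun
  rw [rk_prime_pow k hp e]
  push_cast
  rw [mul_pow, ← pow_mul, ← pow_mul]
  have : ((-1 : ℝ) ^ (e * 2)) = 1 := by
    rw [mul_comm, pow_mul]; norm_num
  rw [this, one_mul, mul_comm e 2]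

lemma tsum_hfun_pp (k : ℕ) {p : ℕ} (hp : p.Prime) :
    ∑' e : ℕ, hfun k (p ^ e) = fac k p := by
  rw [tsum_eq_sum (s := Finset.range (k + 1)) (by
    intro e he
    rw [hfun_pp k hp e, Nat.choose_eq_zero_of_lt (by simpa using he)]
    simp)]
  rw [Finset.sum_range_succ']
  rw [hfun_pp k hp 0]
  simp only [Nat.choose_zero_right, mul_zero, pow_zero, Nat.cast_one, one_pow, div_one]
  rw [fac, add_comm]
  congr 1
  rw [← Finset.Ico_add_one_right_eq_Icc, Finset.sum_Ico_eq_sum_range]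
  simp only [Nat.add_sub_cancel_left, Nat.succ_sub_one, Nat.add_sub_cancel]
  refine Finset.sum_congr rfl fun i _ => ?_
  rw [hfun_pp k hp (i + 1), add_comm 1 i]

lemma choose_le_two_pow' (k v : ℕ) : Nat.choose k v ≤ 2 ^ k := by
  rcases le_or_gt v k with h | h
  · calc Nat.choose k v ≤ ∑ m ∈ Finset.range (k + 1), Nat.choose k m :=
          Finset.single_le_sum (fun i _ => Nat.zero_le _) (Finset.mem_range.mpr (by omega))
    _ = 2 ^ k := Nat.sum_range_choose k
  · simp [Nat.choose_eq_zero_of_lt h]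

lemma fac_le (k : ℕ) {p : ℕ} (hp : p.Prime) :
    fac k p ≤ Real.exp ((4 : ℝ) ^ k * k * ((p : ℝ) ^ 2)⁻¹) := by
  have hp2 : (2 : ℝ) ≤ (p : ℝ) := by exact_mod_cast hp.two_le
  have hpos : (0 : ℝ) < (p : ℝ) ^ 2 := by positivity
  have hbound : ∑ v ∈ Finset.Icc 1 k, ((k.choose v : ℝ)) ^ 2 / (p : ℝ) ^ (2 * v)
      ≤ (4 : ℝ) ^ k * k * ((p : ℝ) ^ 2)⁻¹ := by
    calc ∑ v ∈ Finset.Icc 1 k, ((k.choose v : ℝ)) ^ 2 / (p : ℝ) ^ (2 * v)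
        ≤ ∑ v ∈ Finset.Icc 1 k, (4 : ℝ) ^ k / (p : ℝ) ^ 2 := by
          refine Finset.sum_le_sum fun v hv => ?_
          have hv1 : 1 ≤ v := (Finset.mem_Icc.mp hv).1
          refine div_le_div₀ (by positivity) ?_ hpos ?_
          · have h1 : ((k.choose v : ℝ)) ≤ (2 : ℝ) ^ k := by
              exact_mod_cast choose_le_two_pow' k v
            calc ((k.choose v : ℝ)) ^ 2 ≤ ((2 : ℝ) ^ k) ^ 2 := by
                  exact pow_le_pow_left₀ (by positivity) h1 2
              _ = (4 : ℝ) ^ k := by rw [← pow_mul, mul_comm k 2, pow_mul]; norm_num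
          · exact pow_le_pow_right₀ (by linarith) (by omega)
      _ = (4 : ℝ) ^ k * k * ((p : ℝ) ^ 2)⁻¹ := by
          rw [Finset.sum_const, Nat.card_Icc]
          simp only [Nat.add_sub_cancel, nsmul_eq_mul]
          field_simp
  calc fac k p ≤ 1 + (4 : ℝ) ^ k * k * ((p : ℝ) ^ 2)⁻¹ := by
        rw [fac]; linarith
    _ ≤ Real.exp ((4 : ℝ) ^ k * k * ((p : ℝ) ^ 2)⁻¹) := by
        rw [add_comm]; exact Real.add_one_le_exp _

lemma one_le_fac (k p : ℕ) : 1 ≤ fac k p := by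
  rw [fac]
  have : 0 ≤ ∑ v ∈ Finset.Icc 1 k, ((k.choose v : ℝ)) ^ 2 / (p : ℝ) ^ (2 * v) :=
    Finset.sum_nonneg fun v _ => by positivity
  linarith

lemma summable_pp (k : ℕ) {p : ℕ} (hp : p.Prime) :
    Summable (fun e : ℕ => ‖hfun k (p ^ e)‖) :=
  summable_of_ne_finset_zero (s := Finset.range (k + 1)) (fun e he => by
    rw [hfun_pp k hp e, Nat.choose_eq_zero_of_lt (by simpa using he)]; simp)

lemma summable_hfun (k : ℕ) : Summable (hfun k) := by
  set b : ℕ → ℝ := fun n => (4 : ℝ) ^ k * k * ((n : ℝ) ^ 2)⁻¹ with hb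
  have hbsum : Summable b := (Real.summable_nat_pow_inv.mpr one_lt_two).mul_left _
  refine summable_of_sum_range_le (c := Real.exp (∑' n, b n))
    (fun n => hfun_nonneg k n) (fun N => ?_)
  have key := (EulerProduct.summable_and_hasSum_smoothNumbers_prod_primesBelow_tsum
    (f := hfun k) (hfun_one k) (fun {m n} h => hfun_mul k h) (fun {p} hp => summable_pp k hp) N).2
  rw [show (fun m : N.smoothNumbers => hfun k ↑m) = (hfun k) ∘ Subtype.val from rfl,
    hasSum_subtype_iff_indicator] at key
  have h1 : ∑ m ∈ Finset.range N, hfun k m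
      = ∑ m ∈ Finset.range N, Set.indicator N.smoothNumbers (hfun k) m := by
    refine Finset.sum_congr rfl fun m hm => ?_
    rcases Nat.eq_zero_or_pos m with h0 | h0
    · subst h0
      rw [hfun_zero, Set.indicator_apply_eq_zero.mpr fun _ => hfun_zero k]
    · rw [Set.indicator_of_mem (Nat.mem_smoothNumbers_of_lt h0 (Finset.mem_range.mp hm))]
  rw [h1]
  calc ∑ m ∈ Finset.range N, Set.indicator N.smoothNumbers (hfun k) m
      ≤ ∑' m, Set.indicator N.smoothNumbers (hfun k) m :=
        Summable.sum_le_tsum _ (fun m _ => Set.indicator_nonneg (fun n _ => hfun_nonneg k n) m)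
          key.summable
    _ = ∏ p ∈ N.primesBelow, ∑' e, hfun k (p ^ e) := key.tsum_eq
    _ ≤ Real.exp (∑' n, b n) := ?_
  calc ∏ p ∈ N.primesBelow, ∑' e, hfun k (p ^ e)
      ≤ ∏ p ∈ N.primesBelow, Real.exp (b p) := by
        refine Finset.prod_le_prod (fun p hp => ?_) (fun p hp => ?_)
        · exact tsum_nonneg fun e => hfun_nonneg _ _
        · rw [tsum_hfun_pp k (Nat.prime_of_mem_primesBelow hp)]
          exact fac_le k (Nat.prime_of_mem_primesBelow hp)
    _ = Real.exp (∑ p ∈ N.primesBelow, b p) := (Real.exp_sum _ _).symm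
    _ ≤ Real.exp (∑' n, b n) := Real.exp_le_exp.mpr
        (Summable.sum_le_tsum _ (fun n _ => by positivity) hbsum)

lemma summable_norm_hfun (k : ℕ) : Summable (fun m => ‖hfun k m‖) :=
  (summable_hfun k).congr fun m => (Real.norm_of_nonneg (hfun_nonneg k m)).symm


/-- The series `∑_{gcd(m,q)=1} r_k(m)²/m²` converges, with Euler product
`∏_{p ∤ q} (1 + ∑_{v=1}^k binom(k,v)²/p^{2v})
  = C(k) ∏_{p ∣ q} (1 + ∑_{v=1}^k binom(k,v)²/p^{2v})⁻¹`;
in particular the infinite product defining `C(k)` converges. -/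
theorem rk_squared_series_euler_product (k q : ℕ) (hk : 0 < k) (hq : 0 < q) :
    Summable (fun m : ℕ =>
        if Nat.gcd m q = 1 then ((rk k m : ℝ)) ^ 2 / (m : ℝ) ^ 2 else 0) ∧
    Multipliable (fun p : Nat.Primes =>
        (1 + ∑ v ∈ Finset.Icc 1 k, ((k.choose v : ℝ)) ^ 2 / ((p : ℕ) : ℝ) ^ (2 * v))) ∧
    (∑' m : ℕ, if Nat.gcd m q = 1 then ((rk k m : ℝ)) ^ 2 / (m : ℝ) ^ 2 else 0)
      = ∏' p : {p : Nat.Primes // ¬ ((p : ℕ) ∣ q)},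
          (1 + ∑ v ∈ Finset.Icc 1 k,
            ((k.choose v : ℝ)) ^ 2 / (((p : Nat.Primes) : ℕ) : ℝ) ^ (2 * v)) ∧
    (∑' m : ℕ, if Nat.gcd m q = 1 then ((rk k m : ℝ)) ^ 2 / (m : ℝ) ^ 2 else 0)
      = Ck k * (∏ p ∈ q.primeFactors,
          (1 + ∑ v ∈ Finset.Icc 1 k, ((k.choose v : ℝ)) ^ 2 / (p : ℝ) ^ (2 * v)))⁻¹ := by
  classical
  set g : ℕ → ℝ := fun m => if Nat.gcd m q = 1 then hfun k m else 0 with hgdef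
  -- basic properties of g
  have g0 : g 0 = 0 := by
    simp only [hgdef]
    split_ifs <;> simp [hfun_zero]
  have g1 : g 1 = 1 := by
    simp [hgdef, hfun_one]
  have gmul : ∀ {m n : ℕ}, Nat.Coprime m n → g (m * n) = g m * g n := by
    intro m n hmn
    simp only [hgdef]
    by_cases hm : Nat.gcd m q = 1 <;> by_cases hn : Nat.gcd n q = 1
    · rw [if_pos (Nat.Coprime.mul hm hn), if_pos hm, if_pos hn, hfun_mul k hmn]
    · rw [if_neg, if_pos hm, if_neg hn, mul_zero]
      exact fun h => hn (Nat.coprime_mul_iff_left.mp h).2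
    · rw [if_neg, if_neg hm, if_pos hn, zero_mul]
      exact fun h => hm (Nat.coprime_mul_iff_left.mp h).1
    · rw [if_neg, if_neg hm, zero_mul]
      exact fun h => hm (Nat.coprime_mul_iff_left.mp h).1
  have gnonneg : ∀ m, 0 ≤ g m := by
    intro m; simp only [hgdef]
    split_ifs
    · exact hfun_nonneg k m
    · exact le_refl 0
  have gle : ∀ m, g m ≤ hfun k m := by
    intro m; simp only [hgdef]
    split_ifs
    · exact le_refl _
    · exact hfun_nonneg k m
  have gsummable : Summable g := Summable.of_nonneg_of_le gnonneg gle (summable_hfun k)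
  have gnormsummable : Summable (fun m => ‖g m‖) :=
    gsummable.congr fun m => (Real.norm_of_nonneg (gnonneg m)).symm
  -- Euler product for g
  have Hg : HasProd (fun p : Nat.Primes => ∑' e : ℕ, g ((p : ℕ) ^ e)) (∑' m, g m) :=
    EulerProduct.eulerProduct_hasProd g1 gmul gnormsummable g0
  have locg : ∀ p : Nat.Primes,
      (∑' e : ℕ, g ((p : ℕ) ^ e)) = if (p : ℕ) ∣ q then 1 else fac k (p : ℕ) := by
    intro p
    by_cases hpq : (p : ℕ) ∣ q
    · rw [if_pos hpq]
      rw [tsum_eq_single 0 ?_]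
      · simpa using g1
      · intro e he
        simp only [hgdef]
        rw [if_neg]
        intro hcop
        have hdvd : (p : ℕ) ∣ Nat.gcd ((p : ℕ) ^ e) q :=
          Nat.dvd_gcd (dvd_pow_self _ he) hpq
        rw [hcop] at hdvd
        exact p.2.one_lt.ne' (Nat.dvd_one.mp hdvd)
    · rw [if_neg hpq]
      have hcop : ∀ e : ℕ, Nat.gcd ((p : ℕ) ^ e) q = 1 := fun e =>
        Nat.Coprime.pow_left e ((Nat.Prime.coprime_iff_not_dvd p.2).mpr hpq)
      rw [show (fun e : ℕ => g ((p : ℕ) ^ e)) = fun e => hfun k ((p : ℕ) ^ e) from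
        funext fun e => by simp only [hgdef, if_pos (hcop e)]]
      exact tsum_hfun_pp k p.2
  simp only [locg] at Hg
  -- Euler product for hfun
  have Hh : HasProd (fun p : Nat.Primes => fac k (p : ℕ)) (∑' m, hfun k m) := by
    have := EulerProduct.eulerProduct_hasProd (f := hfun k) (hfun_one k)
      (fun {m n} h => hfun_mul k h) (summable_norm_hfun k) (hfun_zero k)
    simpa only [fun p : Nat.Primes => tsum_hfun_pp k p.2] using this
  -- conjunct 3 prep
  have hsupp : Function.mulSupport
      (fun p : Nat.Primes => if (p : ℕ) ∣ q then 1 else fac k (p : ℕ))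
      ⊆ {p : Nat.Primes | ¬ (p : ℕ) ∣ q} := by
    intro p hp
    by_contra hmem
    simp only [Set.mem_setOf_eq, not_not] at hmem
    exact hp (if_pos hmem)
  have H3 := (hasProd_subtype_iff_of_mulSupport_subset hsupp).mpr Hg
  have E3 : ((fun p : Nat.Primes => if (p : ℕ) ∣ q then 1 else fac k (p : ℕ)) ∘
      (Subtype.val : {p : Nat.Primes | ¬ (p : ℕ) ∣ q} → Nat.Primes))
      = fun p : {p : Nat.Primes | ¬ (p : ℕ) ∣ q} => fac k ((p : Nat.Primes) : ℕ) :=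
    funext fun p => if_neg p.2
  rw [E3] at H3
  -- conjunct 4 prep
  have sFdef : ∀ p : Nat.Primes, p ∈ ((q.primeFactors.subtype Nat.Prime : Finset Nat.Primes)) ↔
      (p : ℕ) ∈ q.primeFactors := fun p => Finset.mem_subtype
  have HGprod : HasProd (fun p : Nat.Primes => if (p : ℕ) ∣ q then fac k (p : ℕ) else 1)
      (∏ p ∈ (q.primeFactors.subtype Nat.Prime : Finset Nat.Primes),
        if (p : ℕ) ∣ q then fac k (p : ℕ) else 1) := by
    refine hasProd_prod_of_ne_finset_one fun p hp => if_neg fun hdvd => ?_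
    exact hp ((sFdef p).mpr (Nat.mem_primeFactors.mpr ⟨p.2, hdvd, hq.ne'⟩))
  have Hcomb := Hg.mul HGprod
  have Ecomb : (fun p : Nat.Primes =>
      (if (p : ℕ) ∣ q then 1 else fac k (p : ℕ)) *
        (if (p : ℕ) ∣ q then fac k (p : ℕ) else 1)) =
      fun p : Nat.Primes => fac k (p : ℕ) := by
    funext p
    by_cases hpq : (p : ℕ) ∣ q
    · rw [if_pos hpq, if_pos hpq, one_mul]
    · rw [if_neg hpq, if_neg hpq, mul_one]
  rw [Ecomb] at Hcomb
  have EP : (∏ p ∈ (q.primeFactors.subtype Nat.Prime : Finset Nat.Primes),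
        if (p : ℕ) ∣ q then fac k (p : ℕ) else 1)
      = ∏ n ∈ q.primeFactors, fac k n := by
    refine Eq.trans (Finset.prod_congr rfl fun p hp => if_pos
      (Nat.mem_primeFactors.mp ((sFdef p).mp hp)).2.1) ?_
    rw [Finset.prod_subtype_eq_prod_filter]
    exact Finset.prod_congr
      (Finset.filter_true_of_mem fun n hn => Nat.prime_of_mem_primeFactors hn)
      fun _ _ => rfl
  rw [EP] at Hcomb
  have Ppos : 0 < ∏ n ∈ q.primeFactors, fac k n :=
    Finset.prod_pos fun n _ => lt_of_lt_of_le one_pos (one_le_fac k n)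
  have ECk : Ck k = (∑' m, g m) * ∏ n ∈ q.primeFactors, fac k n :=
    (Hh.tprod_eq.trans (Hh.unique Hcomb) : Ck k = _)
  refine ⟨gsummable, Hh.multipliable, H3.tprod_eq.symm, ?_⟩
  show (∑' m, g m) = Ck k * (∏ n ∈ q.primeFactors, fac k n)⁻¹
  rw [ECk, mul_assoc, mul_inv_cancel₀ Ppos.ne', mul_one]
end

section
/- Let k be a positive integer. For every ε > 0 there exists a constant C_{k,ε} > 0 such that for every integer q ≥ 2 one has ∑_{m ≤ q², gcd(m,q)=1} ( d_k(m)/m ) · ∑_{m < n ≤ q², n ≡ m (mod q)} d_k(n)/n ≤ C_{k,ε} · q^{−1+ε}. (This bounds the non-diagonal contribution in the orthogonality expansion of the negative 2k-th moment; since |r_k| ≤ d_k, the same bound holds with r_k in place of d_k and absolute values around the double sum.) -/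
/-- `d_k`, the `k`-fold divisor function: `d_k(n)` is the number of ordered
`k`-tuples of positive integers with product `n`. -/
def dk (k : ℕ) : ArithmeticFunction ℕ := ArithmeticFunction.zeta ^ k

open Finset ArithmeticFunction Real

lemma card_antidiag (n : ℕ) (hn : n ≠ 0) :
    (Nat.divisorsAntidiagonal n).card = n.divisors.card := by
  rw [← Nat.image_fst_divisorsAntidiagonal]
  rw [Finset.card_image_of_injOn]
  intro x hx y hy hxy
  simp only [Finset.mem_coe, Nat.mem_divisorsAntidiagonal] at hx hy
  have hx0 : x.1 ≠ 0 := by rintro h; exact hx.2 (by rw [← hx.1, h, zero_mul])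
  ext
  · exact hxy
  · have := hx.1.trans hy.1.symm
    rw [hxy] at this
    exact (Nat.eq_of_mul_eq_mul_left (Nat.pos_of_ne_zero (hxy ▸ hx0)) this)

lemma dk_succ_apply (k n : ℕ) (hn : n ≠ 0) :
    dk (k+1) n = ∑ p ∈ Nat.divisorsAntidiagonal n, dk k p.1 := by
  have : dk (k+1) = dk k * ArithmeticFunction.zeta := by
    simp [dk, pow_succ]
  rw [this, ArithmeticFunction.mul_apply]
  refine Finset.sum_congr rfl fun p hp => ?_
  rw [Nat.mem_divisorsAntidiagonal] at hp
  have : p.2 ≠ 0 := by rintro h; exact hp.2 (by rw [← hp.1, h, mul_zero])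
  simp [ArithmeticFunction.zeta_apply, this]

lemma dk_le_pow (k n : ℕ) (hn : n ≠ 0) : dk (k+1) n ≤ n.divisors.card ^ k := by
  induction k generalizing n with
  | zero => simp [dk, hn]
  | succ k ih =>
    rw [dk_succ_apply _ _ hn]
    calc ∑ p ∈ Nat.divisorsAntidiagonal n, dk (k+1) p.1
        ≤ ∑ p ∈ Nat.divisorsAntidiagonal n, n.divisors.card ^ k := by
          refine Finset.sum_le_sum fun p hp => ?_
          rw [Nat.mem_divisorsAntidiagonal] at hp
          have h1 : p.1 ≠ 0 := by rintro h; exact hp.2 (by rw [← hp.1, h, zero_mul])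
          refine (ih p.1 h1).trans (Nat.pow_le_pow_left ?_ k)
          exact Finset.card_le_card (Nat.divisors_subset_of_dvd hp.2 ⟨p.2, hp.1.symm⟩)
      _ = n.divisors.card ^ (k+1) := by
          rw [Finset.sum_const, card_antidiag n hn, smul_eq_mul, pow_succ, mul_comm]

lemma card_divisors_le_rpow (δ : ℝ) (hδ : 0 < δ) :
    ∃ C : ℝ, 1 ≤ C ∧ ∀ n : ℕ, n ≠ 0 → (n.divisors.card : ℝ) ≤ C * (n : ℝ) ^ δ := by
  set M : ℝ := 1 + 1 / (δ * Real.log 2) with hM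
  have hlog2 : (0:ℝ) < Real.log 2 := Real.log_pos (by norm_num)
  have hM1 : 1 ≤ M := by
    have h : 0 < 1 / (δ * Real.log 2) := by positivity
    rw [hM]; linarith
  set B : ℕ := ⌈(2:ℝ) ^ (1/δ)⌉₊ with hB
  refine ⟨M ^ B, one_le_pow₀ hM1, fun n hn => ?_⟩
  have key : ∀ p ∈ n.primeFactors, ((n.factorization p : ℝ) + 1) ≤
      (if p < B then M else 1) * ((p : ℝ) ^ (n.factorization p)) ^ δ := by
    intro p hp
    have hp2 : 2 ≤ p := (Nat.prime_of_mem_primeFactors hp).two_le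
    set a : ℕ := n.factorization p
    have hp0 : (0:ℝ) < (p:ℝ) := by positivity
    have hbase : ((2:ℝ) ^ (a:ℝ)) ^ δ ≤ ((p:ℝ) ^ (a:ℝ)) ^ δ := by
      apply Real.rpow_le_rpow (by positivity) _ hδ.le
      exact Real.rpow_le_rpow (by norm_num) (by exact_mod_cast hp2) (by positivity)
    by_cases hpB : p < B
    · simp only [hpB, if_true]
      have h1 : (a : ℝ) + 1 ≤ M * ((2:ℝ) ^ ((a:ℝ) * δ)) := by
        have he : 1 + (a:ℝ) * δ * Real.log 2 ≤ (2:ℝ) ^ ((a:ℝ) * δ) := by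
          rw [Real.rpow_def_of_pos (by norm_num)]
          calc 1 + (a:ℝ) * δ * Real.log 2 = ((a:ℝ)*δ*Real.log 2) + 1 := by ring
            _ ≤ Real.exp ((a:ℝ)*δ*Real.log 2) := Real.add_one_le_exp _
            _ = Real.exp (Real.log 2 * ((a:ℝ)*δ)) := by ring_nf
        have hMa : M * (1 + (a:ℝ) * δ * Real.log 2) ≥ (a:ℝ) + 1 := by
          have expand : M * (1 + (a:ℝ) * δ * Real.log 2)
              = M + (a:ℝ) * δ * Real.log 2 + (a:ℝ) := by
            have hinv : 1 / (δ * Real.log 2) * (δ * Real.log 2) = 1 :=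
              one_div_mul_cancel (by positivity)
            rw [hM]
            linear_combination (a:ℝ) * hinv
          have : (0:ℝ) ≤ (a:ℝ) * δ * Real.log 2 := by positivity
          rw [expand]; linarith
        calc (a:ℝ) + 1 ≤ M * (1 + (a:ℝ)*δ*Real.log 2) := hMa
          _ ≤ M * ((2:ℝ) ^ ((a:ℝ)*δ)) := by
              apply mul_le_mul_of_nonneg_left he (by linarith)
      calc ((a:ℕ) : ℝ) + 1 ≤ M * ((2:ℝ) ^ ((a:ℝ) * δ)) := h1
        _ = M * ((2:ℝ) ^ (a:ℝ)) ^ δ := by rw [← Real.rpow_mul (by norm_num)]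
        _ ≤ M * ((p:ℝ) ^ (a:ℝ)) ^ δ := by
            apply mul_le_mul_of_nonneg_left hbase (by linarith)
        _ = M * ((p:ℝ) ^ a) ^ δ := by rw [Real.rpow_natCast]
    · simp only [hpB, if_false, one_mul]
      have hpB' : ((2:ℝ) ^ (1/δ)) ≤ (p:ℝ) := le_trans (Nat.le_ceil _) (by exact_mod_cast Nat.not_lt.mp hpB)
      have h2 : (2:ℝ) ≤ (p:ℝ) ^ δ := by
        have := Real.rpow_le_rpow (by positivity) hpB' hδ.le
        rwa [← Real.rpow_mul (by norm_num), one_div, inv_mul_cancel₀ (ne_of_gt hδ), Real.rpow_one] at this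
      calc ((a:ℕ):ℝ) + 1 ≤ (2:ℝ) ^ a := by
            exact_mod_cast Nat.succ_le_of_lt (Nat.lt_two_pow_self (n := a))
        _ ≤ ((p:ℝ) ^ δ) ^ a := pow_le_pow_left₀ (by norm_num) h2 a
        _ = ((p:ℝ) ^ a) ^ δ := by
            rw [← Real.rpow_natCast ((p:ℝ) ^ δ) a, ← Real.rpow_mul (by positivity),
              mul_comm, Real.rpow_mul (by positivity), Real.rpow_natCast]
  have hcard : (n.divisors.card : ℝ) = ∏ p ∈ n.primeFactors, ((n.factorization p : ℝ) + 1) := by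
    rw [Nat.card_divisors hn]
    push_cast
    rfl
  have hns : (n : ℝ) ^ δ = ∏ p ∈ n.primeFactors, ((p:ℝ) ^ (n.factorization p)) ^ δ := by
    have : (n : ℝ) = ∏ p ∈ n.primeFactors, (p:ℝ) ^ (n.factorization p) := by
      conv_lhs => rw [← Nat.factorization_prod_pow_eq_self hn]
      rw [Nat.prod_factorization_eq_prod_primeFactors]
      push_cast
      rfl
    rw [this]
    exact (Real.finset_prod_rpow _ _ (fun i _ => by positivity) _).symm
  rw [hcard, hns]
  calc ∏ p ∈ n.primeFactors, ((n.factorization p : ℝ) + 1)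
      ≤ ∏ p ∈ n.primeFactors, (if p < B then M else 1) * ((p:ℝ) ^ (n.factorization p)) ^ δ := by
        refine Finset.prod_le_prod (fun p _ => by positivity) key
    _ = (∏ p ∈ n.primeFactors, (if p < B then M else 1)) *
        (∏ p ∈ n.primeFactors, ((p:ℝ) ^ (n.factorization p)) ^ δ) := Finset.prod_mul_distrib
    _ ≤ M ^ B * ∏ p ∈ n.primeFactors, ((p:ℝ) ^ (n.factorization p)) ^ δ := by
        apply mul_le_mul_of_nonneg_right _ (Finset.prod_nonneg fun p _ => by positivity)
        have hsplit : (∏ p ∈ n.primeFactors, (if p < B then M else (1:ℝ)))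
            = M ^ (n.primeFactors.filter (· < B)).card := by
          rw [Finset.prod_ite, Finset.prod_const, Finset.prod_const, one_pow, mul_one]
        rw [hsplit]
        apply pow_le_pow_right₀ hM1
        calc (n.primeFactors.filter (· < B)).card ≤ (Finset.range B).card := by
              apply Finset.card_le_card
              intro x hx
              rw [Finset.mem_filter] at hx
              exact Finset.mem_range.mpr hx.2
          _ = B := Finset.card_range B

lemma sum_dk_div_le (k N : ℕ) (hN : 1 ≤ N) :
    ∑ m ∈ Icc 1 N, (dk k m : ℝ)/m ≤ (∑ m ∈ Icc 1 N, (1:ℝ)/m)^k := by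
  induction k with
  | zero =>
    have : ∀ m ∈ Icc 1 N, (dk 0 m : ℝ)/m = if m = 1 then 1 else 0 := by
      intro m hm
      rw [Finset.mem_Icc] at hm
      by_cases h : m = 1
      · simp [h, dk]
      · have : (dk 0) m = 0 := by
          simp [dk, ArithmeticFunction.one_apply, h]
        simp [this, h]
    rw [Finset.sum_congr rfl this, Finset.sum_ite_eq' (Icc 1 N) 1 (fun _ => (1:ℝ))]
    simp [Finset.mem_Icc, hN]
  | succ k ih =>
    have hne : ∀ m ∈ Icc 1 N, m ≠ 0 := fun m hm => by
      rw [Finset.mem_Icc] at hm; omega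
    have step1 : ∑ m ∈ Icc 1 N, (dk (k+1) m : ℝ)/m
        = ∑ m ∈ Icc 1 N, ∑ p ∈ Nat.divisorsAntidiagonal m,
            (dk k p.1 : ℝ)/(p.1 * p.2) := by
      refine Finset.sum_congr rfl fun m hm => ?_
      rw [dk_succ_apply k m (hne m hm)]
      push_cast
      rw [Finset.sum_div]
      refine Finset.sum_congr rfl fun p hp => ?_
      rw [Nat.mem_divisorsAntidiagonal] at hp
      rw [← hp.1]
      push_cast
      ring
    rw [step1]
    have hdisj : (Icc 1 N : Set ℕ).PairwiseDisjoint
        (fun m => Nat.divisorsAntidiagonal m) := by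
      intro x hx y hy hxy
      simp only [Function.onFun, Finset.disjoint_left]
      intro p hp hq
      rw [Nat.mem_divisorsAntidiagonal] at hp hq
      exact hxy (hp.1.symm.trans hq.1)
    rw [← Finset.sum_biUnion hdisj]
    have hsub : (Icc 1 N).biUnion (fun m => Nat.divisorsAntidiagonal m)
        ⊆ (Icc 1 N) ×ˢ (Icc 1 N) := by
      intro p hp
      rw [Finset.mem_biUnion] at hp
      obtain ⟨m, hm, hpm⟩ := hp
      rw [Finset.mem_Icc] at hm
      rw [Nat.mem_divisorsAntidiagonal] at hpm
      have h1 : p.1 ∣ m := ⟨p.2, hpm.1.symm⟩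
      have h2 : p.2 ∣ m := ⟨p.1, by rw [← hpm.1]; ring⟩
      rw [Finset.mem_product, Finset.mem_Icc, Finset.mem_Icc]
      have hm0 : 0 < m := by omega
      constructor
      · exact ⟨Nat.pos_of_dvd_of_pos h1 hm0, le_trans (Nat.le_of_dvd hm0 h1) hm.2⟩
      · exact ⟨Nat.pos_of_dvd_of_pos h2 hm0, le_trans (Nat.le_of_dvd hm0 h2) hm.2⟩
    calc ∑ p ∈ (Icc 1 N).biUnion (fun m => Nat.divisorsAntidiagonal m),
            (dk k p.1 : ℝ)/(p.1 * p.2)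
        ≤ ∑ p ∈ (Icc 1 N) ×ˢ (Icc 1 N), (dk k p.1 : ℝ)/(p.1 * p.2) := by
          refine Finset.sum_le_sum_of_subset_of_nonneg hsub fun p _ _ => by positivity
      _ = (∑ a ∈ Icc 1 N, (dk k a : ℝ)/a) * (∑ b ∈ Icc 1 N, (1:ℝ)/b) := by
          rw [Finset.sum_mul_sum]
          rw [Finset.sum_product]
          refine Finset.sum_congr rfl fun a _ => Finset.sum_congr rfl fun b _ => ?_
          field_simp
      _ ≤ (∑ m ∈ Icc 1 N, (1:ℝ)/m)^k * (∑ m ∈ Icc 1 N, (1:ℝ)/m) := by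
          apply mul_le_mul_of_nonneg_right ih
          exact Finset.sum_nonneg fun m _ => by positivity
      _ = (∑ m ∈ Icc 1 N, (1:ℝ)/m)^(k+1) := by rw [pow_succ]

lemma sum_one_div_le_log (N : ℕ) (hN : 1 ≤ N) :
    ∑ m ∈ Icc 1 N, (1:ℝ)/m ≤ 1 + Real.log N := by
  have h : ((harmonic N : ℚ) : ℝ) = ∑ m ∈ Icc 1 N, (1:ℝ)/m := by
    rw [harmonic_eq_sum_Icc]
    push_cast
    simp [one_div]
  rw [← h]
  exact harmonic_le_one_add_log N

lemma one_add_log_le (δ x : ℝ) (hδ : 0 < δ) (hx : 1 ≤ x) :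
    1 + Real.log x ≤ (1 + 1/δ) * x ^ δ := by
  have hx0 : (0:ℝ) < x := by linarith
  have h1 : (1:ℝ) ≤ x ^ δ := Real.one_le_rpow hx hδ.le
  have h2 : Real.log x ≤ x ^ δ / δ := by
    have hlog : δ * Real.log x = Real.log (x ^ δ) := (Real.log_rpow hx0 δ).symm
    have h3 : Real.log (x ^ δ) ≤ x ^ δ - 1 := Real.log_le_sub_one_of_pos (by positivity)
    rw [le_div_iff₀ hδ, mul_comm, hlog]
    linarith
  calc 1 + Real.log x ≤ x ^ δ + x ^ δ / δ := by linarith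
    _ = (1 + 1/δ) * x ^ δ := by field_simp

set_option maxHeartbeats 2000000 in
/-- The non-diagonal contribution
`∑_{m ≤ q², (m,q)=1} (d_k(m)/m) ∑_{m < n ≤ q², n ≡ m (q)} d_k(n)/n ≪_{k,ε} q^{-1+ε}`. -/
theorem nondiagonal_divisor_sum_bound (k : ℕ) (hk : 0 < k) :
    ∀ ε : ℝ, 0 < ε → ∃ C : ℝ, 0 < C ∧
      ∀ q : ℕ, 2 ≤ q →
        (∑ m ∈ Finset.Icc 1 (q ^ 2),
          if Nat.gcd m q = 1 then
            ((dk k m : ℝ) / (m : ℝ)) *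
              ∑ n ∈ Finset.Ioc m (q ^ 2),
                (if ((n : ZMod q) = (m : ZMod q)) then (dk k n : ℝ) / (n : ℝ) else 0)
          else 0)
        ≤ C * (q : ℝ) ^ (-1 + ε) := by
  intro ε hε
  obtain ⟨k', rfl⟩ : ∃ k', k = k' + 1 := ⟨k-1, (Nat.succ_pred_eq_of_pos hk).symm⟩
  set K : ℕ := k' + 1 with hK
  set δ : ℝ := ε / (4 * K + 1) with hδdef
  have hδ : 0 < δ := by positivity
  obtain ⟨Cd, hCd1, hCd⟩ := card_divisors_le_rpow δ hδ
  have hCd0 : 0 < Cd := lt_of_lt_of_le one_pos hCd1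
  refine ⟨(Cd ^ k') * ((1 + 1/δ)) * ((1 + 2/δ) ^ K), by positivity, fun q hq => ?_⟩
  have hq1 : (1:ℕ) ≤ q := by omega
  have hQ : (0:ℝ) < (q:ℝ) := by positivity
  have hQ1 : (1:ℝ) ≤ (q:ℝ) := by exact_mod_cast hq1
  have hN1 : 1 ≤ q ^ 2 := Nat.one_le_pow _ _ (by omega)
  -- the uniform bound on dk K n for n ≤ 2 q^2
  set D : ℝ := (Cd * (q:ℝ) ^ (3*δ)) ^ k' with hDdef
  have hD0 : 0 < D := by positivity
  have hD : ∀ n : ℕ, 1 ≤ n → n ≤ 2 * q ^ 2 → (dk K n : ℝ) ≤ D := by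
    intro n hn1 hn2
    have hn0 : n ≠ 0 := by omega
    have step1 : (dk K n : ℝ) ≤ ((n.divisors.card : ℝ)) ^ k' := by
      exact_mod_cast dk_le_pow k' n hn0
    have step2 : (n.divisors.card : ℝ) ≤ Cd * (q:ℝ) ^ (3*δ) := by
      refine (hCd n hn0).trans ?_
      apply mul_le_mul_of_nonneg_left _ hCd0.le
      have hn3 : (n:ℝ) ≤ (q:ℝ)^(3:ℕ) := by
        have : n ≤ q ^ 3 := by nlinarith [hq1, hn2, sq_nonneg q]
        exact_mod_cast this
      calc (n:ℝ) ^ δ ≤ ((q:ℝ)^(3:ℕ)) ^ δ := Real.rpow_le_rpow (by positivity) hn3 hδ.le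
        _ = (q:ℝ) ^ (3*δ) := by
            rw [← Real.rpow_natCast (q:ℝ) 3, ← Real.rpow_mul hQ.le]
            norm_num
    refine step1.trans ?_
    exact pow_le_pow_left₀ (by positivity) step2 k'
  -- harmonic sums
  set H1 : ℝ := ∑ j ∈ Icc 1 q, (1:ℝ)/j with hH1def
  set H2 : ℝ := ∑ m ∈ Icc 1 (q^2), (1:ℝ)/m with hH2def
  have hH1nn : 0 ≤ H1 := Finset.sum_nonneg fun _ _ => by positivity
  have hH2nn : 0 ≤ H2 := Finset.sum_nonneg fun _ _ => by positivity
  -- inner sum bound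
  have inner_bound : ∀ m ∈ Icc 1 (q^2),
      (∑ n ∈ Finset.Ioc m (q ^ 2),
        (if ((n : ZMod q) = (m : ZMod q)) then (dk K n : ℝ) / (n : ℝ) else 0))
      ≤ D * H1 / q := by
    intro m hm
    rw [Finset.mem_Icc] at hm
    rw [← Finset.sum_filter]
    set S := (Finset.Ioc m (q ^ 2)).filter (fun n : ℕ => ((n : ZMod q) = (m : ZMod q))) with hS
    have hsub : S ⊆ (Icc 1 q).image (fun j => m + j * q) := by
      intro n hn
      rw [hS, Finset.mem_filter, Finset.mem_Ioc] at hn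
      obtain ⟨⟨hmn, hnq⟩, hcong⟩ := hn
      have hmod : m ≡ n [MOD q] := ((ZMod.natCast_eq_natCast_iff n m q).mp hcong).symm
      have hdvd : q ∣ n - m := (Nat.modEq_iff_dvd' (le_of_lt hmn)).mp hmod
      obtain ⟨j, hj⟩ := hdvd
      have hj1 : 1 ≤ j := by
        rcases Nat.eq_zero_or_pos j with h | h
        · subst h; simp at hj; omega
        · exact h
      have hn' : n = m + q * j := by omega
      have hqq : q ^ 2 = q * q := by ring
      have h2 : q * j < q * q := by omega
      have hjq : j ≤ q := le_of_lt (Nat.lt_of_mul_lt_mul_left h2)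
      rw [Finset.mem_image]
      refine ⟨j, Finset.mem_Icc.mpr ⟨hj1, hjq⟩, ?_⟩
      rw [Nat.mul_comm]
      omega
    calc ∑ n ∈ S, (dk K n : ℝ) / n
        ≤ ∑ n ∈ (Icc 1 q).image (fun j => m + j * q), (dk K n : ℝ) / n :=
          Finset.sum_le_sum_of_subset_of_nonneg hsub (fun n _ _ => by positivity)
      _ = ∑ j ∈ Icc 1 q, (dk K (m + j * q) : ℝ) / ((m + j * q : ℕ) : ℝ) :=
          Finset.sum_image (fun a _ b _ hab =>
            Nat.eq_of_mul_eq_mul_right (show 0 < q by omega) (by omega : a * q = b * q))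
      _ ≤ ∑ j ∈ Icc 1 q, (D / q) * (1/j) := by
          refine Finset.sum_le_sum fun j hj => ?_
          rw [Finset.mem_Icc] at hj
          have h1 : 1 ≤ m + j * q := by omega
          have h2 : m + j * q ≤ 2 * q ^ 2 := by nlinarith [hm.2, hj.2]
          have hdkb := hD (m + j * q) h1 h2
          have hjq0 : (0:ℝ) < (j:ℝ) * q := by
            have : 0 < j := hj.1
            positivity
          have hden : (0:ℝ) < ((m:ℝ) + (j:ℝ) * q) := by positivity
          have hfrac : (1:ℝ) / ((m:ℝ) + (j:ℝ)*q) ≤ 1 / ((j:ℝ)*q) := by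
            apply one_div_le_one_div_of_le hjq0
            have hm0 : (0:ℝ) ≤ (m:ℝ) := by positivity
            linarith
          have hcast : ((m + j * q : ℕ) : ℝ) = (m:ℝ) + (j:ℝ)*(q:ℝ) := by push_cast; ring
          rw [hcast, div_eq_mul_one_div]
          calc (dk K (m + j * q) : ℝ) * (1 / ((m:ℝ) + (j:ℝ)*q))
              ≤ D * (1 / ((j:ℝ)*q)) := mul_le_mul hdkb hfrac (by positivity) hD0.le
            _ = (D / q) * (1/j) := by
                rw [mul_one_div, mul_one_div, div_div, mul_comm (q:ℝ) (j:ℝ)]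
      _ = (D / q) * H1 := by rw [← Finset.mul_sum]
      _ = D * H1 / q := by ring
  -- outer sum
  have outer : (∑ m ∈ Finset.Icc 1 (q ^ 2),
      if Nat.gcd m q = 1 then
        ((dk K m : ℝ) / (m : ℝ)) *
          ∑ n ∈ Finset.Ioc m (q ^ 2),
            (if ((n : ZMod q) = (m : ZMod q)) then (dk K n : ℝ) / (n : ℝ) else 0)
      else 0) ≤ (D * H1 / q) * H2 ^ K := by
    have hterm : ∀ m ∈ Finset.Icc 1 (q^2),
        (if Nat.gcd m q = 1 then
          ((dk K m : ℝ) / (m : ℝ)) *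
            ∑ n ∈ Finset.Ioc m (q ^ 2),
              (if ((n : ZMod q) = (m : ZMod q)) then (dk K n : ℝ) / (n : ℝ) else 0)
        else 0) ≤ ((dk K m : ℝ) / (m : ℝ)) * (D * H1 / q) := by
      intro m hm
      have hrhs : 0 ≤ ((dk K m : ℝ) / (m : ℝ)) * (D * H1 / q) := by positivity
      by_cases h : Nat.gcd m q = 1
      · simp only [h, if_true]
        apply mul_le_mul_of_nonneg_left (inner_bound m hm) (by positivity)
      · simp only [h, if_false]
        exact hrhs
    calc _ ≤ ∑ m ∈ Finset.Icc 1 (q^2), ((dk K m : ℝ) / (m : ℝ)) * (D * H1 / q) :=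
          Finset.sum_le_sum hterm
      _ = (D * H1 / q) * ∑ m ∈ Finset.Icc 1 (q^2), (dk K m : ℝ) / m := by
          rw [← Finset.sum_mul]; ring
      _ ≤ (D * H1 / q) * H2 ^ K := by
          apply mul_le_mul_of_nonneg_left (sum_dk_div_le K (q^2) hN1) (by positivity)
  refine outer.trans ?_
  -- now the analytic estimates
  have hH1 : H1 ≤ (1 + 1/δ) * (q:ℝ) ^ δ := by
    refine (sum_one_div_le_log q hq1).trans (one_add_log_le δ (q:ℝ) hδ hQ1)
  have hH2 : H2 ≤ (1 + 2/δ) * (q:ℝ) ^ δ := by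
    have h1 : H2 ≤ 1 + Real.log ((q:ℝ)^2) := by
      have h0 := sum_one_div_le_log (q^2) hN1
      have hc : ((q^2 : ℕ) : ℝ) = (q:ℝ)^2 := by push_cast; ring
      rwa [hc] at h0
    refine h1.trans ?_
    have hlog : Real.log ((q:ℝ)^2) = 2 * Real.log q := by
      rw [Real.log_pow]
      push_cast
      ring
    have h2 : Real.log (q:ℝ) ≤ (q:ℝ)^δ / δ := by
      have h3 := one_add_log_le δ (q:ℝ) hδ hQ1
      have h4 : Real.log (q:ℝ) ≤ (q:ℝ) ^ δ / δ := by
        have hlog2 : δ * Real.log (q:ℝ) = Real.log ((q:ℝ) ^ δ) := (Real.log_rpow hQ δ).symm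
        have h5 : Real.log ((q:ℝ) ^ δ) ≤ (q:ℝ) ^ δ - 1 := Real.log_le_sub_one_of_pos (by positivity)
        rw [le_div_iff₀ hδ, mul_comm, hlog2]
        linarith
      exact h4
    have hqd1 : (1:ℝ) ≤ (q:ℝ) ^ δ := Real.one_le_rpow hQ1 hδ.le
    rw [hlog]
    calc 1 + 2 * Real.log (q:ℝ) ≤ (q:ℝ)^δ + 2 * ((q:ℝ)^δ/δ) := by linarith
      _ = (1 + 2/δ) * (q:ℝ)^δ := by field_simp
  have hDb : D ≤ Cd ^ k' * (q:ℝ) ^ (3*δ*k') := by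
    rw [hDdef, mul_pow]
    apply mul_le_mul_of_nonneg_left _ (by positivity)
    rw [← Real.rpow_natCast ((q:ℝ) ^ (3*δ)) k', ← Real.rpow_mul hQ.le]
  -- combine
  have final : (D * H1 / q) * H2 ^ K ≤
      (Cd ^ k' * (1 + 1/δ) * (1 + 2/δ)^K) *
        ((q:ℝ) ^ (3*δ*k') * (q:ℝ)^δ * ((q:ℝ)^δ)^K / q) := by
    have hH2K : H2 ^ K ≤ ((1 + 2/δ) * (q:ℝ)^δ) ^ K := pow_le_pow_left₀ hH2nn hH2 K
    calc (D * H1 / q) * H2 ^ K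
        ≤ ((Cd ^ k' * (q:ℝ) ^ (3*δ*k')) * ((1 + 1/δ) * (q:ℝ)^δ) / q) *
            (((1 + 2/δ) * (q:ℝ)^δ) ^ K) := by
          apply mul_le_mul _ hH2K (by positivity) (by positivity)
          apply div_le_div_of_nonneg_right _ hQ.le
          exact mul_le_mul hDb hH1 hH1nn (by positivity)
      _ = (Cd ^ k' * (1 + 1/δ) * (1 + 2/δ)^K) *
            ((q:ℝ) ^ (3*δ*k') * (q:ℝ)^δ * ((q:ℝ)^δ)^K / q) := by
          rw [mul_pow]
          ring
  refine final.trans ?_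
  apply mul_le_mul_of_nonneg_left _ (by positivity)
  -- power arithmetic
  have hpow : (q:ℝ) ^ (3*δ*k') * (q:ℝ)^δ * ((q:ℝ)^δ)^K / q
      = (q:ℝ) ^ (3*δ*k' + δ + δ*K - 1) := by
    rw [← Real.rpow_natCast ((q:ℝ)^δ) K, ← Real.rpow_mul hQ.le,
      ← Real.rpow_add hQ, ← Real.rpow_add hQ, Real.rpow_sub hQ, Real.rpow_one]
  rw [hpow]
  apply Real.rpow_le_rpow_of_exponent_le hQ1
  have hK1 : (1:ℝ) ≤ (K:ℝ) := by exact_mod_cast Nat.one_le_iff_ne_zero.mpr (by omega)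
  have hk'K : (k':ℝ) ≤ (K:ℝ) := by exact_mod_cast Nat.le_succ k'
  have : 3*δ*k' + δ + δ*K ≤ (4*K + 1) * δ := by nlinarith [hδ.le]
  have hεeq : (4*(K:ℝ) + 1) * δ = ε := by
    rw [hδdef]
    field_simp
  linarith [hεeq ▸ this]
end
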